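/- arXiv:1902.08923 — 2 statements merged into one kernel-verified Lean document; each statement's English description precedes it below -/
import Mathlib

section
/- The map M ↦ Z_B[M] from the set of maximal ideals of B₁(X) to the set of Z_B-ultrafilters on X is a bijection. -/
open Filter Topology

/-- A function `f : X → ℝ` is Baire one if it is a pointwise limit of a
sequence of continuous functions. -/
def IsBaireOne {X : Type*} [TopologicalSpace X] (f : X → ℝ) : Prop :=
  ∃ F : ℕ → C(X, ℝ), ∀ x, Tendsto (fun n => F n x) atTop (𝓝 (f x))

/-- The ring `B₁(X)` of real valued Baire one functions on `X`, as a subring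
of the ring of all functions `X → ℝ`. -/
def B1 (X : Type*) [TopologicalSpace X] : Subring (X → ℝ) where
  carrier := {f | IsBaireOne f}
  zero_mem' := ⟨fun _ => 0, fun x => by simpa using tendsto_const_nhds⟩
  one_mem' := ⟨fun _ => 1, fun x => by simpa using tendsto_const_nhds⟩
  add_mem' := by
    rintro f g ⟨F, hF⟩ ⟨G, hG⟩
    exact ⟨fun n => F n + G n, fun x => by simpa using (hF x).add (hG x)⟩
  mul_mem' := by
    rintro f g ⟨F, hF⟩ ⟨G, hG⟩
    exact ⟨fun n => F n * G n, fun x => by simpa using (hF x).mul (hG x)⟩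
  neg_mem' := by
    rintro f ⟨F, hF⟩
    exact ⟨fun n => -F n, fun x => by simpa using (hF x).neg⟩

variable {X : Type*} [TopologicalSpace X]

/-- The constant function with value `r`, as an element of `B₁(X)`. -/
def bconst (X : Type*) [TopologicalSpace X] (r : ℝ) : B1 X :=
  ⟨fun _ => r, ⟨fun _ => ContinuousMap.const X r, fun x => by simpa using tendsto_const_nhds⟩⟩

theorem babs_mem (f : B1 X) : (fun x => |(f : X → ℝ) x|) ∈ B1 X := by
  obtain ⟨F, hF⟩ := f.2
  exact ⟨fun n => ⟨fun x => |F n x|, (F n).continuous.abs⟩, fun x => (hF x).abs⟩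

/-- The absolute value `|f|` of a Baire one function. -/
def babs (f : B1 X) : B1 X := ⟨fun x => |(f : X → ℝ) x|, babs_mem f⟩

/-- The zero set `Z(f)` of `f ∈ B₁(X)`. -/
def zset (f : B1 X) : Set X := {x | (f : X → ℝ) x = 0}

/-- `Z(B₁(X))`, the family of all zero sets of Baire one functions on `X`. -/
def zsets (X : Type*) [TopologicalSpace X] : Set (Set X) := {Z | ∃ f : B1 X, zset f = Z}

/-- `Z_B[I] = {Z(f) : f ∈ I}` for an ideal `I` of `B₁(X)`. -/
def zbi (I : Ideal (B1 X)) : Set (Set X) := {Z | ∃ f ∈ I, zset f = Z}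

/-- A `Z_B`-filter on `X`: a nonempty family of zero sets of Baire one functions,
not containing `∅`, closed under finite intersections and upward closed in `Z(B₁(X))`. -/
def IsZBFilter (F : Set (Set X)) : Prop :=
  F.Nonempty ∧ F ⊆ zsets X ∧ ∅ ∉ F ∧
    (∀ Z₁ ∈ F, ∀ Z₂ ∈ F, Z₁ ∩ Z₂ ∈ F) ∧
    (∀ Z ∈ F, ∀ Z' ∈ zsets X, Z ⊆ Z' → Z' ∈ F)

/-- A `Z_B`-ultrafilter on `X`: a maximal `Z_B`-filter. -/
def IsZBUltrafilter (U : Set (Set X)) : Prop :=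
  IsZBFilter U ∧ ∀ F : Set (Set X), IsZBFilter F → U ⊆ F → F = U

/-- The finite intersection property: every nonempty finite subfamily has
nonempty intersection. -/
def FIP {X : Type*} (B : Set (Set X)) : Prop :=
  ∀ S : Finset (Set X), ↑S ⊆ B → S.Nonempty → (⋂₀ (S : Set (Set X))).Nonempty

/-- An ideal `I` of `B₁(X)` is a `Z_B`-ideal if `Z_B⁻¹[Z_B[I]] = I`. -/
def IsZBIdeal (I : Ideal (B1 X)) : Prop :=
  ∀ f : B1 X, zset f ∈ zbi I → f ∈ I

/-- An ideal of `B₁(X)` is fixed if the zero sets of its members have a common point. -/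
def FixedIdeal (I : Ideal (B1 X)) : Prop :=
  (⋂ f ∈ (I : Set (B1 X)), zset f).Nonempty

/-- A prime `Z_B`-filter. -/
def IsPrimeZBFilter (F : Set (Set X)) : Prop :=
  IsZBFilter F ∧ ∀ Z₁ ∈ zsets X, ∀ Z₂ ∈ zsets X, Z₁ ∪ Z₂ ∈ F → Z₁ ∈ F ∨ Z₂ ∈ F

/-- `M(f) ≥ 0` in the quotient `B₁(X)/M`: the coset contains a nonnegative function. -/
def QNonneg (M : Ideal (B1 X)) (a : B1 X ⧸ M) : Prop :=
  ∃ g : B1 X, (∀ x, 0 ≤ (g : X → ℝ) x) ∧ Ideal.Quotient.mk M g = a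

/-- `M(f) > 0` in the quotient `B₁(X)/M`. -/
def QPos (M : Ideal (B1 X)) (a : B1 X ⧸ M) : Prop := QNonneg M a ∧ a ≠ 0

/-- A maximal ideal `M` of `B₁(X)` is real if the canonical copy of `ℝ`
(via constant functions) is all of `B₁(X)/M`. -/
def RealIdeal (M : Ideal (B1 X)) : Prop :=
  Function.Surjective (fun r : ℝ => Ideal.Quotient.mk M (bconst X r))

/-- An `F_σ` subset: a countable union of closed sets. -/
def IsFSigma {X : Type*} [TopologicalSpace X] (s : Set X) : Prop :=
  ∃ F : ℕ → Set X, (∀ n, IsClosed (F n)) ∧ s = ⋃ n, F n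

section Aux

lemma zset_zero' : zset (0 : B1 X) = Set.univ := by
  ext x; simp [zset]

lemma zset_one' : zset (1 : B1 X) = ∅ := by
  ext x; simp [zset]

lemma zset_mul' (f g : B1 X) : zset (f * g) = zset f ∪ zset g := by
  ext x; simp [zset, mul_eq_zero]

lemma zset_sq_add_sq (f g : B1 X) : zset (f * f + g * g) = zset f ∩ zset g := by
  ext x
  simp only [zset, Set.mem_setOf_eq, Set.mem_inter_iff, Subring.coe_add, Subring.coe_mul,
    Pi.add_apply, Pi.mul_apply]
  constructor
  · intro h
    have h1 := add_eq_zero_iff_of_nonneg (mul_self_nonneg _) (mul_self_nonneg _) |>.mp h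
    exact ⟨mul_self_eq_zero.mp h1.1, mul_self_eq_zero.mp h1.2⟩
  · rintro ⟨h1, h2⟩; rw [h1, h2]; ring

lemma zset_add_supset (f g : B1 X) : zset f ∩ zset g ⊆ zset (f + g) := by
  rintro x ⟨h1, h2⟩
  simp only [zset, Set.mem_setOf_eq] at *
  simp [h1, h2]

lemma exists_mul_eq_one (f : B1 X) (hf : ∀ x, (f : X → ℝ) x ≠ 0) :
    ∃ g : B1 X, f * g = 1 := by
  obtain ⟨F, hF⟩ := f.2
  have hmem : IsBaireOne (fun x => ((f : X → ℝ) x)⁻¹) := by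
    refine ⟨fun n => ⟨fun x => F n x / ((F n x) ^ 2 + 1 / ((n : ℝ) + 1)), ?_⟩, ?_⟩
    · exact (F n).continuous.div (((F n).continuous.pow 2).add continuous_const)
        (fun x => by positivity)
    · intro x
      have hd : Filter.Tendsto (fun n => (F n x) ^ 2 + 1 / ((n : ℝ) + 1)) Filter.atTop
          (𝓝 (((f : X → ℝ) x) ^ 2)) := by
        simpa using ((hF x).pow 2).add tendsto_one_div_add_atTop_nhds_zero_nat
      have := (hF x).div hd (pow_ne_zero 2 (hf x))
      have he : (f : X → ℝ) x / ((f : X → ℝ) x) ^ 2 = ((f : X → ℝ) x)⁻¹ := by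
        rw [sq]; field_simp
      rwa [he] at this
  refine ⟨⟨fun x => ((f : X → ℝ) x)⁻¹, hmem⟩, ?_⟩
  ext x
  simp only [Subring.coe_mul, Pi.mul_apply, Subring.coe_one, Pi.one_apply]
  exact mul_inv_cancel₀ (hf x)

lemma empty_not_mem_zbi {I : Ideal (B1 X)} (hI : I ≠ ⊤) : ∅ ∉ zbi I := by
  rintro ⟨f, hfI, hz⟩
  have hf : ∀ x, (f : X → ℝ) x ≠ 0 := by
    intro x hx
    have : x ∈ zset f := hx
    rw [hz] at this
    exact this
  obtain ⟨g, hg⟩ := exists_mul_eq_one f hf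
  exact hI (Ideal.eq_top_of_isUnit_mem I hfI ⟨⟨f, g, hg, by rw [mul_comm] at hg; exact hg⟩, rfl⟩)

lemma zbi_isZBFilter {I : Ideal (B1 X)} (hI : I ≠ ⊤) : IsZBFilter (zbi I) := by
  refine ⟨⟨zset 0, 0, I.zero_mem, rfl⟩, ?_, empty_not_mem_zbi hI, ?_, ?_⟩
  · rintro Z ⟨f, _, rfl⟩; exact ⟨f, rfl⟩
  · rintro Z₁ ⟨f, hf, rfl⟩ Z₂ ⟨g, hg, rfl⟩
    exact ⟨f * f + g * g, I.add_mem (I.mul_mem_left f hf) (I.mul_mem_left g hg),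
      zset_sq_add_sq f g⟩
  · rintro Z ⟨f, hf, rfl⟩ Z' ⟨g, rfl⟩ hsub
    refine ⟨f * g, I.mul_mem_right g hf, ?_⟩
    rw [zset_mul']
    exact Set.union_eq_self_of_subset_left hsub

/-- The ideal `Z⁻¹[F]` associated to a `Z_B`-filter `F`. -/
def zinvIdeal (F : Set (Set X)) (hF : IsZBFilter F) : Ideal (B1 X) where
  carrier := {f | zset f ∈ F}
  zero_mem' := by
    obtain ⟨Z, hZ⟩ := hF.1
    have := hF.2.2.2.2 Z hZ Set.univ ⟨0, zset_zero'⟩ (Set.subset_univ _)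
    simpa [zset_zero'] using this
  add_mem' := by
    intro f g hf hg
    exact hF.2.2.2.2 _ (hF.2.2.2.1 _ hf _ hg) _ ⟨f + g, rfl⟩ (zset_add_supset f g)
  smul_mem' := by
    intro c f hf
    have : zset (c * f) ∈ F := by
      refine hF.2.2.2.2 _ hf _ ⟨c * f, rfl⟩ ?_
      rw [zset_mul']; exact Set.subset_union_right
    simpa [smul_eq_mul] using this

lemma mem_zinvIdeal {F : Set (Set X)} {hF : IsZBFilter F} {f : B1 X} :
    f ∈ zinvIdeal F hF ↔ zset f ∈ F := Iff.rfl

lemma zinvIdeal_ne_top {F : Set (Set X)} (hF : IsZBFilter F) : zinvIdeal F hF ≠ ⊤ := by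
  intro h
  have : (1 : B1 X) ∈ zinvIdeal F hF := by rw [h]; trivial
  rw [mem_zinvIdeal, zset_one'] at this
  exact hF.2.2.1 this

/-- Maximal ideals are `Z_B`-ideals. -/
lemma mem_of_zset_mem {M : Ideal (B1 X)} (hM : M.IsMaximal) {f : B1 X}
    (hf : zset f ∈ zbi M) : f ∈ M := by
  by_contra hfM
  obtain ⟨c, i, hiM, hci⟩ := hM.exists_inv hfM
  obtain ⟨g, hgM, hgz⟩ := hf
  have hmem : zset (g * g + i * i) ∈ zbi M :=
    ⟨g * g + i * i, M.add_mem (M.mul_mem_left g hgM) (M.mul_mem_left i hiM), rfl⟩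
  have hne : zset (g * g + i * i) ≠ ∅ := by
    intro h; rw [h] at hmem; exact empty_not_mem_zbi hM.ne_top hmem
  obtain ⟨x, hx⟩ := Set.nonempty_iff_ne_empty.mpr hne
  rw [zset_sq_add_sq] at hx
  have hfx : (f : X → ℝ) x = 0 := by
    have : x ∈ zset f := hgz ▸ hx.1
    exact this
  have hix : (i : X → ℝ) x = 0 := hx.2
  have := congrArg (fun h : B1 X => (h : X → ℝ) x) hci
  simp only [Subring.coe_add, Subring.coe_mul, Pi.add_apply, Pi.mul_apply,
    Subring.coe_one, Pi.one_apply, hfx, hix, mul_zero, add_zero] at this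
  exact one_ne_zero this.symm

lemma zbi_eq_of_maximal {M : Ideal (B1 X)} (hM : M.IsMaximal) {F : Set (Set X)}
    (hF : IsZBFilter F) (hsub : zbi M ⊆ F) : F = zbi M := by
  have hMJ : M ≤ zinvIdeal F hF := fun f hf => hsub ⟨f, hf, rfl⟩
  have hJM : zinvIdeal F hF = M := (hM.eq_of_le (zinvIdeal_ne_top hF) hMJ).symm
  apply Set.Subset.antisymm _ hsub
  intro Z hZ
  obtain ⟨f, rfl⟩ := hF.2.1 hZ
  have : f ∈ zinvIdeal F hF := hZ
  rw [hJM] at this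
  exact ⟨f, this, rfl⟩

end Aux

/-- `M ↦ Z_B[M]` is a bijection from the maximal ideals of `B₁(X)` onto the
`Z_B`-ultrafilters on `X`. -/
theorem zbi_bijOn_maximals {X : Type*} [TopologicalSpace X] :
    Set.BijOn (fun M : Ideal (B1 X) => zbi M)
      {M : Ideal (B1 X) | M.IsMaximal} {U : Set (Set X) | IsZBUltrafilter U} := by
  refine ⟨?_, ?_, ?_⟩
  · -- MapsTo
    intro M hM
    refine ⟨zbi_isZBFilter hM.ne_top, fun F hF hsub => zbi_eq_of_maximal hM hF hsub⟩
  · -- InjOn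
    intro M₁ hM₁ M₂ hM₂ h
    simp only at h
    ext f
    constructor
    · intro hf
      exact mem_of_zset_mem hM₂ (h ▸ ⟨f, hf, rfl⟩)
    · intro hf
      exact mem_of_zset_mem hM₁ (h ▸ ⟨f, hf, rfl⟩ : zset f ∈ zbi M₁)
  · -- SurjOn
    intro U hU
    have hUF : IsZBFilter U := hU.1
    set M := zinvIdeal U hUF with hMdef
    have hzbi : zbi M = U := by
      apply Set.Subset.antisymm
      · rintro Z ⟨f, hf, rfl⟩; exact hf
      · intro Z hZ
        obtain ⟨f, rfl⟩ := hUF.2.1 hZ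
        exact ⟨f, hZ, rfl⟩
    have hmax : M.IsMaximal := by
      rw [Ideal.isMaximal_def]
      refine ⟨zinvIdeal_ne_top hUF, fun J hJ => ?_⟩
      by_contra hJtop
      have hJF : IsZBFilter (zbi J) := zbi_isZBFilter hJtop
      have hsub : U ⊆ zbi J := by
        rw [← hzbi]
        rintro Z ⟨f, hf, rfl⟩
        exact ⟨f, hJ.le hf, rfl⟩
      have hJU : zbi J = U := hU.2 (zbi J) hJF hsub
      have hJM : J ≤ M := by
        intro f hf
        have hzf : zset f ∈ U := hJU ▸ ⟨f, hf, rfl⟩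
        exact mem_zinvIdeal.mpr hzf
      exact absurd (le_antisymm hJM hJ.le) hJ.ne'
    exact ⟨M, hmax, hzbi⟩
end

section
/- Every prime ideal of B₁(X) is contained in a unique maximal ideal; consequently B₁(X) is a Gelfand ring. -/
open Filter Topology

variable {X : Type*} [TopologicalSpace X]

/-!
Suppose a prime `P` lies in distinct maximal ideals `M` and `N`, and write `1 = g + f` with `g ∈ N`,
`f ∈ M`. The functions `|f - g| + (f - g)` and `|g - f| + (g - f)` (twice the positive parts of
`f - g` and `g - f`) multiply to `0`, so one of them lies in `P`. But the first equals `2` on `Z(g)`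
and the second equals `2` on `Z(f)`, whereas two functions without a common zero never lie in a
proper ideal of `B₁(X)`: the sum of their squares vanishes nowhere, and the reciprocal of a nowhere
vanishing Baire one function is again Baire one.
-/

theorem IsBaireOne.inv {f : X → ℝ} (hf : IsBaireOne f) (hf0 : ∀ x, f x ≠ 0) :
    IsBaireOne f⁻¹ := by
  obtain ⟨F, hF⟩ := hf
  -- `F n / (F n ^ 2 + 1 / (n + 1))` has a nonvanishing denominator and tends to `f / f ^ 2`.
  refine ⟨fun n => ⟨fun x => F n x / (F n x ^ 2 + 1 / (n + 1)), ?_⟩, fun x => ?_⟩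
  · exact (F n).continuous.div (by fun_prop) fun x => by positivity
  · have hden : Tendsto (fun n : ℕ => F n x ^ 2 + 1 / ((n : ℝ) + 1)) atTop (𝓝 (f x ^ 2)) := by
      simpa using ((hF x).pow 2).add tendsto_one_div_add_atTop_nhds_zero_nat
    have hlim := (hF x).div hden (pow_ne_zero 2 (hf0 x))
    rwa [sq, div_self_mul_self'] at hlim

namespace B1

theorem isUnit_of_forall_ne_zero (h : B1 X) (h0 : ∀ x, (h : X → ℝ) x ≠ 0) : IsUnit h := by
  refine IsUnit.of_mul_eq_one (⟨_, h.2.inv h0⟩ : B1 X) (Subtype.ext (funext fun x => ?_))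
  exact mul_inv_cancel₀ (h0 x)

theorem exists_common_zero {I : Ideal (B1 X)} (hI : I ≠ ⊤) {a b : B1 X} (ha : a ∈ I)
    (hb : b ∈ I) : ∃ x, (a : X → ℝ) x = 0 ∧ (b : X → ℝ) x = 0 := by
  by_contra! hab
  have hunit : IsUnit (a * a + b * b) := by
    refine isUnit_of_forall_ne_zero _ fun x hx => ?_
    have hx' : (a : X → ℝ) x * (a : X → ℝ) x + (b : X → ℝ) x * (b : X → ℝ) x = 0 := hx
    exact hab x (mul_self_add_mul_self_eq_zero.mp hx').1 (mul_self_add_mul_self_eq_zero.mp hx').2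
  exact hI (I.eq_top_of_isUnit_mem (add_mem (I.mul_mem_left a ha) (I.mul_mem_left b hb)) hunit)

theorem babs_sub_add_sub_mul_eq_zero (f g : B1 X) :
    (babs (f - g) + (f - g)) * (babs (g - f) + (g - f)) = 0 := by
  refine Subtype.ext (funext fun x => ?_)
  change (|(f : X → ℝ) x - (g : X → ℝ) x| + ((f : X → ℝ) x - (g : X → ℝ) x)) *
    (|(g : X → ℝ) x - (f : X → ℝ) x| + ((g : X → ℝ) x - (f : X → ℝ) x)) = 0
  rw [abs_sub_comm]
  rcases le_total ((g : X → ℝ) x) ((f : X → ℝ) x) with hle | hle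
  · rw [abs_of_nonpos (sub_nonpos.mpr hle)]; ring
  · rw [abs_of_nonneg (sub_nonneg.mpr hle)]; ring

theorem babs_sub_add_sub_notMem {I : Ideal (B1 X)} (hI : I ≠ ⊤) {f g : B1 X} (hg : g ∈ I)
    (hgf : g + f = 1) : babs (f - g) + (f - g) ∉ I := by
  intro hmem
  obtain ⟨x, hgx, hx⟩ := exists_common_zero hI hg hmem
  have hfx : (f : X → ℝ) x = 1 := by
    simpa [hgx] using congrFun (congrArg Subtype.val hgf) x
  have : |(f : X → ℝ) x - (g : X → ℝ) x| + ((f : X → ℝ) x - (g : X → ℝ) x) = 0 := hx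
  norm_num [hfx, hgx] at this

end B1

/-- Every prime ideal of `B₁(X)` extends to a unique maximal ideal; hence
`B₁(X)` is a Gelfand ring. -/
theorem b1_gelfand {X : Type*} [TopologicalSpace X]
    (P : Ideal (B1 X)) (hP : P.IsPrime) :
    ∃! M : Ideal (B1 X), M.IsMaximal ∧ P ≤ M := by
  obtain ⟨M, hM, hPM⟩ := P.exists_le_maximal hP.ne_top
  refine ⟨M, ⟨hM, hPM⟩, fun N ⟨hN, hPN⟩ => by_contra fun hNM => ?_⟩
  have hone : (1 : B1 X) ∈ N ⊔ M := (hN.coprime_of_ne hM hNM).symm ▸ Submodule.mem_top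
  obtain ⟨g, hg, f, hf, hgf⟩ := Submodule.mem_sup.mp hone
  rcases hP.mem_or_mem (B1.babs_sub_add_sub_mul_eq_zero f g ▸ P.zero_mem) with hu | hv
  · exact B1.babs_sub_add_sub_notMem hN.ne_top hg hgf (hPN hu)
  · exact B1.babs_sub_add_sub_notMem hM.ne_top hf ((add_comm f g).trans hgf) (hPM hv)
end
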